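/- For probability distributions P and Q on a finite set with Q strictly positive, the Kullback–Leibler divergence satisfies KL(P‖Q) ≤ (log e / 2) · (TV(P‖Q) + χ²(P‖Q)), where KL is measured in bits (base-2 logarithm), TV is the total variation distance and χ² is the chi-square divergence. -/

import Mathlib

open Finset Real

private lemma log_le_half_sub_inv {t : ℝ} (ht : 1 ≤ t) :
    Real.log t ≤ (t - 1/t) / 2 := by
  have ht0 : (0:ℝ) < t := lt_of_lt_of_le one_pos ht
  set x : ℝ := (t - 1/t) / 2 with hx
  have hx0 : 0 ≤ x := by
    have h1 : 1/t ≤ 1 := by rw [div_le_one ht0]; exact ht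
    have h2 : 1/t ≤ t := le_trans h1 ht
    simp only [hx]; linarith
  have hq : 1 + x + x ^ 2 / 2 ≤ Real.exp x := Real.quadratic_le_exp_of_nonneg hx0
  have hpoly : t ≤ 1 + x + x ^ 2 / 2 := by
    have hdiff : 1 + x + x ^ 2 / 2 - t = (t - 1)^4 / (8 * t^2) := by
      rw [hx]; field_simp; ring
    have hpos : 0 ≤ (t - 1)^4 / (8 * t^2) := by positivity
    linarith
  have hte : t ≤ Real.exp x := le_trans hpoly hq
  calc Real.log t ≤ Real.log (Real.exp x) := Real.log_le_log ht0 hte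
    _ = x := Real.log_exp x

private lemma key_pointwise {p q : ℝ} (hp : 0 ≤ p) (hq : 0 < q) :
    p * Real.log (p / q) ≤ (p^2/q - q)/2 + (|p - q| - (p - q))/4 := by
  rcases eq_or_lt_of_le hp with h0 | h0
  · -- p = 0
    rw [← h0, zero_mul]
    have h1 : (0:ℝ)^2 / q = 0 := by simp
    have habs : |(0:ℝ) - q| = q := by rw [zero_sub, abs_neg, abs_of_pos hq]
    rw [h1, habs]; linarith
  · rcases le_or_gt q p with hge | hlt
    · -- p ≥ q
      rw [abs_of_nonneg (by linarith : (0:ℝ) ≤ p - q)]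
      have ht : 1 ≤ p / q := (one_le_div hq).mpr hge
      have hlog := log_le_half_sub_inv ht
      have h1 : p * Real.log (p/q) ≤ p * ((p/q - 1/(p/q))/2) :=
        mul_le_mul_of_nonneg_left hlog hp
      have hp0 : 0 < p := lt_of_lt_of_le hq hge
      have h2 : p * ((p/q - 1/(p/q))/2) = (p^2/q - q)/2 := by
        field_simp
      linarith
    · -- p < q
      rw [abs_of_nonpos (by linarith : p - q ≤ 0)]
      have hpq : 0 < p / q := div_pos h0 hq
      have hlog : Real.log (p/q) ≤ p/q - 1 := Real.log_le_sub_one_of_pos hpq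
      have h1 : p * Real.log (p/q) ≤ p * (p/q - 1) :=
        mul_le_mul_of_nonneg_left hlog hp
      have he : p * (p/q - 1) = p^2/q - p := by field_simp
      have hle : p^2/q ≤ p := by
        rw [div_le_iff₀ hq]; nlinarith
      linarith

/-- KL (in bits) is bounded by `(log₂ e / 2) · (TV + χ²)`. -/
theorem kl_le_half_log_e_mul_tv_add_chiSq {α : Type*} [Fintype α] (P Q : α → ℝ)
    (hP : ∀ x, 0 ≤ P x) (hPsum : ∑ x, P x = 1)
    (hQ : ∀ x, 0 < Q x) (hQsum : ∑ x, Q x = 1) :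
    (∑ x, P x * Real.logb 2 (P x / Q x)) ≤
      (Real.logb 2 (Real.exp 1) / 2) *
        ((1 / 2) * ∑ x, |P x - Q x| + ((∑ x, (P x) ^ 2 / Q x) - 1)) := by
  have hlog2 : (0:ℝ) < Real.log 2 := Real.log_pos (by norm_num)
  have hsum : ∑ x, P x * Real.log (P x / Q x) ≤
      ∑ x, ((P x ^ 2 / Q x - Q x)/2 + (|P x - Q x| - (P x - Q x))/4) :=
    Finset.sum_le_sum fun x _ => key_pointwise (hP x) (hQ x)
  have hzero : ∑ x, (P x - Q x) = 0 := by
    rw [Finset.sum_sub_distrib, hPsum, hQsum]; ring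
  have hrhs : ∑ x, ((P x ^ 2 / Q x - Q x)/2 + (|P x - Q x| - (P x - Q x))/4) =
      ((∑ x, P x ^ 2 / Q x) - 1)/2 + (∑ x, |P x - Q x|)/4 := by
    rw [Finset.sum_add_distrib, ← Finset.sum_div, ← Finset.sum_div,
      Finset.sum_sub_distrib (f := fun x => P x ^ 2 / Q x), hQsum,
      Finset.sum_sub_distrib (f := fun x => |P x - Q x|), hzero, sub_zero]
  have hmain : ∑ x, P x * Real.log (P x / Q x) ≤
      ((∑ x, P x ^ 2 / Q x) - 1)/2 + (∑ x, |P x - Q x|)/4 := hrhs ▸ hsum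
  have hLHS : (∑ x, P x * Real.logb 2 (P x / Q x))
      = (∑ x, P x * Real.log (P x / Q x)) / Real.log 2 := by
    rw [Finset.sum_div]
    exact Finset.sum_congr rfl fun x _ => by rw [Real.logb, mul_div_assoc]
  have he : Real.logb 2 (Real.exp 1) = 1 / Real.log 2 := by
    rw [Real.logb, Real.log_exp]
  rw [hLHS, he]
  have hR : (1 / Real.log 2 / 2) *
        ((1 / 2) * ∑ x, |P x - Q x| + ((∑ x, (P x) ^ 2 / Q x) - 1))
      = (((∑ x, P x ^ 2 / Q x) - 1)/2 + (∑ x, |P x - Q x|)/4) / Real.log 2 := by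
    ring
  rw [hR]
  exact div_le_div_of_nonneg_right hmain hlog2.le
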